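/- Let Z0, Z1 be real-valued random variables with CDFs F_{Z0}, F_{Z1}, let μ be a Borel probability measure on ℝ, and let c : [0,1]² → ℝ be continuous. Let {r_s}_{s>0} be a family of continuous, nondecreasing, globally Lipschitz functions ℝ → ℝ with limits 0 at −∞ and 1 at +∞, such that lim_{s→∞} r_s(z) = H(z) = 1_{z>0} for all z ∈ ℝ \ {0} and lim_{s→∞} r_s(0) = r0 > 0. If μ({z}) = 0 for every point z that is an atom of the law of Z0 or of the law of Z1, then, with F_{Z_k}^{(s)}(t) := 1 − E[r_s(Z_k − t)], one has ∫ c(F_{Z0}(t), F_{Z1}(t)) μ(dt) = lim_{s→∞} ∫ c(F_{Z0}^{(s)}(t), F_{Z1}^{(s)}(t)) μ(dt). -/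

import Mathlib

/-!
At a point `t` that is not an atom of `Z`, `r_s(Z - t) → 1_{Z > t}` almost surely, so dominated
convergence gives `F_Z^{(s)}(t) → F_Z(t)`. A law has countably many atoms, which `μ` does not
charge, so this convergence holds `μ`-almost everywhere, and a second dominated convergence, with
`c` bounded on the compact square `[0,1]²` that contains all (relaxed) CDF values, gives the claim.
-/

open MeasureTheory Set Filter Topology

lemma mem_Icc_of_monotone_of_tendsto {f : ℝ → ℝ} (hmono : Monotone f)
    (hbot : Tendsto f atBot (𝓝 0)) (htop : Tendsto f atTop (𝓝 1)) (x : ℝ) :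
    f x ∈ Icc (0 : ℝ) 1 :=
  ⟨hmono.le_of_tendsto hbot x, hmono.ge_of_tendsto htop x⟩

lemma ae_measure_level_set_eq_zero {α β : Type*} [MeasurableSpace α] [MeasurableSpace β]
    [MeasurableSingletonClass β] {P : Measure α} [SFinite P] {g : α → β} (hg : Measurable g)
    {μ : Measure β} (hatoms : ∀ t, P {a | g a = t} ≠ 0 → μ {t} = 0) :
    ∀ᵐ t ∂μ, P {a | g a = t} = 0 := by
  have hcount : {t | P {a | g a = t} ≠ 0}.Countable := by
    simpa only [pos_iff_ne_zero] using Measure.countable_meas_level_set_pos hg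
  rw [ae_iff, ← biUnion_of_singleton {t | ¬P {a | g a = t} = 0}, measure_biUnion_null_iff hcount]
  exact hatoms

lemma norm_le_one_of_mem_Icc {x : ℝ} (hx : x ∈ Icc (0 : ℝ) 1) : ‖x‖ ≤ 1 :=
  (Real.norm_of_nonneg hx.1).trans_le hx.2

section RelaxedCDF

variable {Ω : Type*} [MeasurableSpace Ω] (P : Measure Ω) (Z : Ω → ℝ)

/-- The paper's `F_Z^{(s)}` is `relaxedCDF P Z (r s)`. -/
noncomputable def relaxedCDF (g : ℝ → ℝ) (t : ℝ) : ℝ :=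
  1 - ∫ ω, g (Z ω - t) ∂P

variable {P Z} [IsProbabilityMeasure P]

lemma relaxedCDF_mem_Icc (hZ : Measurable Z) {g : ℝ → ℝ} (hg : Measurable g)
    (hg01 : ∀ x, g x ∈ Icc (0 : ℝ) 1) (t : ℝ) : relaxedCDF P Z g t ∈ Icc (0 : ℝ) 1 := by
  have hint : Integrable (fun ω => g (Z ω - t)) P :=
    (integrable_const (1 : ℝ)).mono' (hg.comp (hZ.sub_const t)).aestronglyMeasurable
      (.of_forall fun _ => norm_le_one_of_mem_Icc (hg01 _))
  have h0 : 0 ≤ ∫ ω, g (Z ω - t) ∂P := integral_nonneg fun _ => (hg01 _).1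
  have h1 : ∫ ω, g (Z ω - t) ∂P ≤ 1 := by
    calc ∫ ω, g (Z ω - t) ∂P ≤ ∫ _, (1 : ℝ) ∂P :=
          integral_mono hint (integrable_const 1) fun _ => (hg01 _).2
      _ = 1 := by simp
  unfold relaxedCDF
  constructor <;> linarith

lemma continuous_relaxedCDF (hZ : Measurable Z) {g : ℝ → ℝ} (hg : Continuous g)
    (hg01 : ∀ x, g x ∈ Icc (0 : ℝ) 1) : Continuous (relaxedCDF P Z g) :=
  continuous_const.sub <| continuous_of_dominated
    (fun t => (hg.measurable.comp (hZ.sub_const t)).aestronglyMeasurable)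
    (fun _ => .of_forall fun _ => norm_le_one_of_mem_Icc (hg01 _)) (integrable_const 1)
    (.of_forall fun _ => hg.comp (continuous_const.sub continuous_id))

lemma tendsto_relaxedCDF {ι : Type*} {l : Filter ι} [l.IsCountablyGenerated] (hZ : Measurable Z)
    {g : ι → ℝ → ℝ} (hg : ∀ᶠ i in l, Measurable (g i))
    (hg01 : ∀ᶠ i in l, ∀ x, g i x ∈ Icc (0 : ℝ) 1)
    (hH : ∀ z : ℝ, z ≠ 0 → Tendsto (fun i => g i z) l (𝓝 (if 0 < z then 1 else 0)))
    {t : ℝ} (ht : P {ω | Z ω = t} = 0) :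
    Tendsto (fun i => relaxedCDF P Z (g i) t) l (𝓝 (P {ω | Z ω ≤ t}).toReal) := by
  have hIoi : MeasurableSet {ω | t < Z ω} := hZ measurableSet_Ioi
  have hlim : Tendsto (fun i => ∫ ω, g i (Z ω - t) ∂P) l
      (𝓝 (∫ ω, {ω | t < Z ω}.indicator 1 ω ∂P)) := by
    refine tendsto_integral_filter_of_dominated_convergence (fun _ => 1)
      (hg.mono fun i hi => (hi.comp (hZ.sub_const t)).aestronglyMeasurable)
      (hg01.mono fun i hi => .of_forall fun ω => norm_le_one_of_mem_Icc (hi _))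
      (integrable_const 1) ?_
    have hne : ∀ᵐ ω ∂P, Z ω ≠ t := measure_eq_zero_iff_ae_notMem.mp ht
    filter_upwards [hne] with ω hω
    convert hH (Z ω - t) (sub_ne_zero.mpr hω) using 2
    by_cases h : t < Z ω <;> simp [h]
  have hcompl : {ω | Z ω ≤ t} = {ω | t < Z ω}ᶜ := by ext; simp
  rw [integral_indicator_one hIoi] at hlim
  rw [← measureReal_def, hcompl, probReal_compl_eq_one_sub hIoi]
  exact tendsto_const_nhds.sub hlim

end RelaxedCDF

lemma tendsto_integral_comp_of_continuousOn {α E G ι : Type*} [MeasurableSpace α]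
    [TopologicalSpace E] [NormedAddCommGroup G] [NormedSpace ℝ G]
    {μ : Measure α} [IsFiniteMeasure μ] {l : Filter ι} [l.IsCountablyGenerated]
    {K : Set E} (hK : IsCompact K) {c : E → G} (hc : ContinuousOn c K)
    {F : ι → α → E} {f : α → E}
    (hF_meas : ∀ᶠ i in l, AEStronglyMeasurable (fun x => c (F i x)) μ)
    (hFK : ∀ᶠ i in l, ∀ x, F i x ∈ K) (hfK : ∀ᵐ x ∂μ, f x ∈ K)
    (hlim : ∀ᵐ x ∂μ, Tendsto (fun i => F i x) l (𝓝 (f x))) :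
    Tendsto (fun i => ∫ x, c (F i x) ∂μ) l (𝓝 (∫ x, c (f x) ∂μ)) := by
  obtain ⟨C, hC⟩ := hK.exists_bound_of_continuousOn hc
  refine tendsto_integral_filter_of_dominated_convergence (fun _ => C) hF_meas
    (hFK.mono fun i hi => .of_forall fun x => hC _ (hi x)) (integrable_const C) ?_
  filter_upwards [hfK, hlim] with x hx hxlim
  exact (hc _ hx).tendsto.comp <| tendsto_nhdsWithin_iff.mpr ⟨hxlim, hFK.mono fun i hi => hi x⟩

theorem stmt_12_general {Ω : Type*} [MeasurableSpace Ω] (P : MeasureTheory.Measure Ω)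
    [MeasureTheory.IsProbabilityMeasure P]
    (Z0 Z1 : Ω → ℝ) (hZ0 : Measurable Z0) (hZ1 : Measurable Z1)
    (μ : MeasureTheory.Measure ℝ) [MeasureTheory.IsProbabilityMeasure μ]
    (c : ℝ → ℝ → ℝ)
    (hc : ContinuousOn (fun p : ℝ × ℝ => c p.1 p.2) (Set.Icc (0 : ℝ) 1 ×ˢ Set.Icc (0 : ℝ) 1))
    (r : ℝ → ℝ → ℝ)
    (hrcont : ∀ s > (0 : ℝ), Continuous (r s))
    (hrmono : ∀ s > (0 : ℝ), Monotone (r s))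
    (hbot : ∀ s > (0 : ℝ), Filter.Tendsto (r s) Filter.atBot (nhds 0))
    (htop : ∀ s > (0 : ℝ), Filter.Tendsto (r s) Filter.atTop (nhds 1))
    (hH : ∀ z : ℝ, z ≠ 0 → Filter.Tendsto (fun s => r s z) Filter.atTop
      (nhds (if 0 < z then (1 : ℝ) else 0)))
    (hatoms : ∀ z : ℝ, (P {ω | Z0 ω = z} ≠ 0 ∨ P {ω | Z1 ω = z} ≠ 0) → μ {z} = 0) :
    Filter.Tendsto
      (fun s => ∫ t, c (1 - ∫ ω, r s (Z0 ω - t) ∂P) (1 - ∫ ω, r s (Z1 ω - t) ∂P) ∂μ)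
      Filter.atTop
      (nhds (∫ t, c ((P {ω | Z0 ω ≤ t}).toReal) ((P {ω | Z1 ω ≤ t}).toReal) ∂μ)) := by
  have hpos : ∀ᶠ s in atTop, (0 : ℝ) < s := eventually_gt_atTop 0
  have hr01 : ∀ᶠ s in atTop, ∀ x, r s x ∈ Icc (0 : ℝ) 1 := hpos.mono fun s hs =>
    mem_Icc_of_monotone_of_tendsto (hrmono s hs) (hbot s hs) (htop s hs)
  have hrmeas : ∀ᶠ s in atTop, Measurable (r s) := hpos.mono fun s hs => (hrcont s hs).measurable
  have hF01 : ∀ᶠ s in atTop, ∀ t, (relaxedCDF P Z0 (r s) t, relaxedCDF P Z1 (r s) t) ∈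
      Icc (0 : ℝ) 1 ×ˢ Icc (0 : ℝ) 1 := (hrmeas.and hr01).mono fun s ⟨hm, h01⟩ t =>
    ⟨relaxedCDF_mem_Icc hZ0 hm h01 t, relaxedCDF_mem_Icc hZ1 hm h01 t⟩
  have hCDF01 : ∀ (Z : Ω → ℝ) t, (P {ω | Z ω ≤ t}).toReal ∈ Icc (0 : ℝ) 1 := fun Z t =>
    ⟨ENNReal.toReal_nonneg, ENNReal.toReal_le_of_le_ofReal zero_le_one (by simp [prob_le_one])⟩
  refine tendsto_integral_comp_of_continuousOn (isCompact_Icc.prod isCompact_Icc) hc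
    (F := fun s t => (relaxedCDF P Z0 (r s) t, relaxedCDF P Z1 (r s) t))
    (f := fun t => ((P {ω | Z0 ω ≤ t}).toReal, (P {ω | Z1 ω ≤ t}).toReal)) ?_ hF01
    (.of_forall fun t => ⟨hCDF01 Z0 t, hCDF01 Z1 t⟩) ?_
  · filter_upwards [hpos, hF01, hr01] with s hs hs01 h01
    exact (hc.comp_continuous ((continuous_relaxedCDF hZ0 (hrcont s hs) h01).prodMk
      (continuous_relaxedCDF hZ1 (hrcont s hs) h01)) hs01).aestronglyMeasurable
  · filter_upwards [ae_measure_level_set_eq_zero hZ0 fun t ht => hatoms t (.inl ht),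
      ae_measure_level_set_eq_zero hZ1 fun t ht => hatoms t (.inr ht)] with t ht0 ht1
    exact (tendsto_relaxedCDF hZ0 hrmeas hr01 hH ht0).prodMk_nhds
      (tendsto_relaxedCDF hZ1 hrmeas hr01 hH ht1)

/-- For continuous cost `c` on `[0,1]²` and a relaxation family `r_s`
converging pointwise to `H(z) = 1_{z>0}` off `0` with `r_s(0) → r0 > 0`, if `μ` assigns
no mass to any atom of the laws of `Z0` or `Z1`, then the relaxed bias
`∫ c(F_{Z0}^{(s)}(t), F_{Z1}^{(s)}(t)) μ(dt)` converges, as `s → ∞`, to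
`∫ c(F_{Z0}(t), F_{Z1}(t)) μ(dt)`. -/
theorem stmt_12 {Ω : Type*} [MeasurableSpace Ω] (P : MeasureTheory.Measure Ω)
    [MeasureTheory.IsProbabilityMeasure P]
    (Z0 Z1 : Ω → ℝ) (hZ0 : Measurable Z0) (hZ1 : Measurable Z1)
    (μ : MeasureTheory.Measure ℝ) [MeasureTheory.IsProbabilityMeasure μ]
    (c : ℝ → ℝ → ℝ)
    (hc : ContinuousOn (fun p : ℝ × ℝ => c p.1 p.2) (Set.Icc (0 : ℝ) 1 ×ˢ Set.Icc (0 : ℝ) 1))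
    (r : ℝ → ℝ → ℝ)
    (hrcont : ∀ s > (0 : ℝ), Continuous (r s))
    (hrmono : ∀ s > (0 : ℝ), Monotone (r s))
    (hrLip : ∀ s > (0 : ℝ), ∃ K : NNReal, LipschitzWith K (r s))
    (hbot : ∀ s > (0 : ℝ), Filter.Tendsto (r s) Filter.atBot (nhds 0))
    (htop : ∀ s > (0 : ℝ), Filter.Tendsto (r s) Filter.atTop (nhds 1))
    (hH : ∀ z : ℝ, z ≠ 0 → Filter.Tendsto (fun s => r s z) Filter.atTop
      (nhds (if 0 < z then (1 : ℝ) else 0)))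
    (r0 : ℝ) (hr0pos : 0 < r0)
    (hH0 : Filter.Tendsto (fun s => r s 0) Filter.atTop (nhds r0))
    (hatoms : ∀ z : ℝ, (P {ω | Z0 ω = z} ≠ 0 ∨ P {ω | Z1 ω = z} ≠ 0) → μ {z} = 0) :
    Filter.Tendsto
      (fun s => ∫ t, c (1 - ∫ ω, r s (Z0 ω - t) ∂P) (1 - ∫ ω, r s (Z1 ω - t) ∂P) ∂μ)
      Filter.atTop
      (nhds (∫ t, c ((P {ω | Z0 ω ≤ t}).toReal) ((P {ω | Z1 ω ≤ t}).toReal) ∂μ)) :=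
  stmt_12_general P Z0 Z1 hZ0 hZ1 μ c hc r hrcont hrmono hbot htop hH hatoms
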